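/- arXiv:0709.4495 — 4 statements merged into one kernel-verified Lean document; each statement's English description precedes it below -/
import Mathlib

section
/- Let (B,ρ,𝔹) be a local contact algebra. Define aC_ρb iff aρb or (a ∉ 𝔹 and b ∉ 𝔹). Then (B, C_ρ) is a normal contact algebra. -/
variable {B : Type*} [BooleanAlgebra B]

/-- A contact relation on a Boolean algebra: axioms (C1)-(C4). -/
def IsContactRel (C : B → B → Prop) : Prop :=
  (∀ a, a ≠ ⊥ → C a a) ∧
  (∀ a b, C a b → a ≠ ⊥ ∧ b ≠ ⊥) ∧
  (∀ a b, C a b → C b a) ∧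
  (∀ a b c, C a (b ⊔ c) ↔ C a b ∨ C a c)

/-- A normal contact relation: additionally axioms (C5) and (C6). -/
def IsNormalContactRel (C : B → B → Prop) : Prop :=
  IsContactRel C ∧
  (∀ a b, ¬ C a b → ∃ c, ¬ C a c ∧ ¬ C b cᶜ) ∧
  (∀ a, a ≠ ⊤ → ∃ b, b ≠ ⊥ ∧ ¬ C b a)

/-- A cluster in a contact algebra: axioms (K1)-(K3). -/
def IsCluster (C : B → B → Prop) (σ : Set B) : Prop :=
  σ.Nonempty ∧
  (∀ a ∈ σ, ∀ b ∈ σ, C a b) ∧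
  (∀ a b, a ⊔ b ∈ σ → a ∈ σ ∨ b ∈ σ) ∧
  (∀ a, (∀ b ∈ σ, C a b) → a ∈ σ)

/-- An ultrafilter in a Boolean algebra, as a set. -/
def IsUltrafilterSet (u : Set B) : Prop :=
  ⊤ ∈ u ∧ ⊥ ∉ u ∧
  (∀ a b, a ∈ u → a ≤ b → b ∈ u) ∧
  (∀ a b, a ∈ u → b ∈ u → a ⊓ b ∈ u) ∧
  (∀ a : B, a ∈ u ∨ aᶜ ∈ u)

/-- Non-tangential inclusion: a ≪ b iff ¬(a ρ bᶜ). -/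
def Ntangle (ρ : B → B → Prop) (a b : B) : Prop := ¬ ρ a bᶜ

/-- An ideal in a Boolean algebra, as a set. -/
def IsIdealSet (I : Set B) : Prop :=
  ⊥ ∈ I ∧ (∀ a b, b ∈ I → a ≤ b → a ∈ I) ∧ (∀ a b, a ∈ I → b ∈ I → a ⊔ b ∈ I)

/-- A local contact algebra structure: ρ is a contact relation and I is an
ideal satisfying axioms (BC1)-(BC3). -/
def IsLocalContact (ρ : B → B → Prop) (I : Set B) : Prop :=
  IsContactRel ρ ∧ IsIdealSet I ∧
  (∀ a ∈ I, ∀ c, Ntangle ρ a c → ∃ b ∈ I, Ntangle ρ a b ∧ Ntangle ρ b c) ∧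
  (∀ a b, ρ a b → ∃ c ∈ I, ρ a (c ⊓ b)) ∧
  (∀ a : B, a ≠ ⊥ → ∃ b ∈ I, b ≠ ⊥ ∧ Ntangle ρ b a)

/-- The Alexandroff extension C_ρ of ρ. -/
def AlexExt (ρ : B → B → Prop) (I : Set B) (a b : B) : Prop :=
  ρ a b ∨ (a ∉ I ∧ b ∉ I)

/-! Taking the two non-bounded elements to be in contact changes nothing on pairs with a bounded
member, so (C1)–(C4) transfer from ρ because 𝔹 is an ideal. For (C5), if `a ∈ 𝔹` and `¬ ρ a b`,
then (BC1) interpolates a bounded `c` with `a ≪ c ≪ bᶜ`, and `cᶜ` separates `a` from `b` also in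
`C_ρ`, since `c` is bounded. For (C6), (BC3) yields a nonzero bounded `b ≪ aᶜ`. -/

lemma ntangle_compl_iff {ρ : B → B → Prop} {a b : B} : Ntangle ρ a bᶜ ↔ ¬ ρ a b := by
  rw [Ntangle, compl_compl]

lemma IsIdealSet.sup_mem_iff {I : Set B} (hI : IsIdealSet I) {a b : B} :
    a ⊔ b ∈ I ↔ a ∈ I ∧ b ∈ I :=
  ⟨fun h => ⟨hI.2.1 _ _ h le_sup_left, hI.2.1 _ _ h le_sup_right⟩,
    fun h => hI.2.2 _ _ h.1 h.2⟩

namespace AlexExt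

lemma not_iff {α : Type*} {ρ : α → α → Prop} {I : Set α} {a b : α} :
    ¬ AlexExt ρ I a b ↔ ¬ ρ a b ∧ (a ∈ I ∨ b ∈ I) := by
  rw [AlexExt]
  tauto

lemma symm {α : Type*} {ρ : α → α → Prop} {I : Set α} (hρ : ∀ a b, ρ a b → ρ b a) {a b : α}
    (h : AlexExt ρ I a b) : AlexExt ρ I b a :=
  h.imp (hρ a b) And.symm

variable {ρ : B → B → Prop} {I : Set B}

lemma isContactRel (hρ : IsContactRel ρ) (hI : IsIdealSet I) : IsContactRel (AlexExt ρ I) := by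
  obtain ⟨hrefl, hne, hsymm, hsup⟩ := hρ
  refine ⟨fun a ha => Or.inl (hrefl a ha), ?_, fun a b => symm hsymm, ?_⟩
  · rintro a b (hab | ⟨ha, hb⟩)
    · exact hne a b hab
    · exact ⟨fun h => ha (h ▸ hI.1), fun h => hb (h ▸ hI.1)⟩
  · intro a b c
    simp only [AlexExt, hsup, hI.sup_mem_iff]
    tauto

lemma exists_separating_of_mem (hρ : ∀ a b, ρ a b → ρ b a)
    (hinterp : ∀ a ∈ I, ∀ c, Ntangle ρ a c → ∃ b ∈ I, Ntangle ρ a b ∧ Ntangle ρ b c)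
    {a b : B} (ha : a ∈ I) (hab : ¬ ρ a b) :
    ∃ c, ¬ AlexExt ρ I a c ∧ ¬ AlexExt ρ I b cᶜ := by
  obtain ⟨c, hc, hac, hcb⟩ := hinterp a ha bᶜ (ntangle_compl_iff.mpr hab)
  refine ⟨cᶜ, not_iff.mpr ⟨hac, Or.inl ha⟩, not_iff.mpr ⟨?_, Or.inr ?_⟩⟩ <;> rw [compl_compl]
  · exact fun hbc => ntangle_compl_iff.mp hcb (hρ b c hbc)
  · exact hc

lemma exists_separating (hρ : ∀ a b, ρ a b → ρ b a)
    (hinterp : ∀ a ∈ I, ∀ c, Ntangle ρ a c → ∃ b ∈ I, Ntangle ρ a b ∧ Ntangle ρ b c)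
    {a b : B} (hab : ¬ AlexExt ρ I a b) :
    ∃ c, ¬ AlexExt ρ I a c ∧ ¬ AlexExt ρ I b cᶜ := by
  obtain ⟨hab, ha | hb⟩ := not_iff.mp hab
  · exact exists_separating_of_mem hρ hinterp ha hab
  · obtain ⟨c, hbc, hac⟩ := exists_separating_of_mem hρ hinterp hb (fun h => hab (hρ b a h))
    exact ⟨cᶜ, hac, by rwa [compl_compl]⟩

lemma exists_ne_bot_not_rel
    (hsmall : ∀ a : B, a ≠ ⊥ → ∃ b ∈ I, b ≠ ⊥ ∧ Ntangle ρ b a) {a : B} (ha : a ≠ ⊤) :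
    ∃ b, b ≠ ⊥ ∧ ¬ AlexExt ρ I b a := by
  obtain ⟨b, hb, hb0, hba⟩ := hsmall aᶜ (compl_eq_bot.not.mpr ha)
  exact ⟨b, hb0, not_iff.mpr ⟨ntangle_compl_iff.mp hba, Or.inl hb⟩⟩

end AlexExt

/-- The Alexandroff extension of the contact relation of a local contact
algebra is a normal contact relation. -/
theorem alexExt_isNormalContact (ρ : B → B → Prop) (I : Set B)
    (h : IsLocalContact ρ I) : IsNormalContactRel (AlexExt ρ I) := by
  obtain ⟨hρ, hI, hinterp, -, hsmall⟩ := h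
  exact ⟨AlexExt.isContactRel hρ hI,
    fun _ _ => AlexExt.exists_separating hρ.2.2.1 hinterp,
    fun _ => AlexExt.exists_ne_bot_not_rel hsmall⟩
end

section
/- Let (B,ρ,𝔹) be a local contact algebra with 1 ∉ 𝔹. Then σ_∞ = {b ∈ B | b ∉ 𝔹} is a cluster in the normal contact algebra (B, C_ρ), where aC_ρb iff aρb or a,b ∉ 𝔹. -/
variable {B : Type*} [BooleanAlgebra B]

namespace IsIdealSet

variable {I : Set B}

theorem notMem_or_notMem_of_sup_notMem (hI : IsIdealSet I) {a b : B} (hab : a ⊔ b ∉ I) :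
    a ∉ I ∨ b ∉ I := by
  by_contra! h
  exact hab (hI.2.2 a b h.1 h.2)

theorem compl_notMem (hI : IsIdealSet I) (htop : (⊤ : B) ∉ I) {b : B} (hb : b ∈ I) :
    bᶜ ∉ I := by
  intro hbc
  exact htop (sup_compl_eq_top (x := b) ▸ hI.2.2 b bᶜ hb hbc)

end IsIdealSet

theorem IsContactRel.ntangle_top {ρ : B → B → Prop} (hρ : IsContactRel ρ) (a : B) :
    Ntangle ρ a ⊤ := by
  intro h
  exact (hρ.2.1 a ⊥ (compl_top (α := B) ▸ h)).2 rfl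

/-- (BC1) applied to `a ≪ ⊤` gives a bounded `b` with `a ≪ b`; then `bᶜ` is unbounded
and separated from `a`. -/
theorem IsLocalContact.exists_notMem_not_rel {ρ : B → B → Prop} {I : Set B}
    (h : IsLocalContact ρ I) (htop : (⊤ : B) ∉ I) {a : B} (ha : a ∈ I) :
    ∃ c ∉ I, ¬ ρ a c := by
  obtain ⟨hρ, hI, hBC1, -⟩ := h
  obtain ⟨b, hbI, hab, -⟩ := hBC1 a ha ⊤ (hρ.ntangle_top a)
  exact ⟨bᶜ, hI.compl_notMem htop hbI, hab⟩

/-- If 1 is unbounded, the set of unbounded elements is a cluster in the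
Alexandroff extension. -/
theorem unbounded_isCluster (ρ : B → B → Prop) (I : Set B)
    (h : IsLocalContact ρ I) (h1 : (⊤ : B) ∉ I) :
    IsCluster (AlexExt ρ I) {b : B | b ∉ I} := by
  refine ⟨⟨⊤, h1⟩, fun a ha b hb => Or.inr ⟨ha, hb⟩,
    fun a b => h.2.1.notMem_or_notMem_of_sup_notMem, fun a ha => ?_⟩
  intro haI
  obtain ⟨c, hcI, hac⟩ := h.exists_notMem_not_rel h1 haI
  rcases ha c hcI with hρ | ⟨haI', -⟩
  · exact hac hρ
  · exact haI' haI
end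

section
/- Let X be a π-regular space and f: X → Y a continuous closed map. Then f is quasi-open if and only if f is skeletal. -/
open Set

variable {X Y : Type*} [TopologicalSpace X] [TopologicalSpace Y]

/-- A function is skeletal if int(f⁻¹(cl V)) ⊆ cl(f⁻¹(V)) for every open V. -/
def Skeletal (f : X → Y) : Prop :=
  ∀ V : Set Y, IsOpen V → interior (f ⁻¹' closure V) ⊆ closure (f ⁻¹' V)

/-- A map is quasi-open if images of non-empty open sets have non-empty
interior. -/
def QuasiOpen (f : X → Y) : Prop :=
  ∀ U : Set X, IsOpen U → U.Nonempty → (interior (f '' U)).Nonempty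

/-- A space is π-regular if every non-empty open set contains the closure of
some non-empty open set. -/
def PiRegular (X : Type*) [TopologicalSpace X] : Prop :=
  ∀ U : Set X, IsOpen U → U.Nonempty →
    ∃ V : Set X, IsOpen V ∧ V.Nonempty ∧ closure V ⊆ U

/-- A set is regular closed if it equals the closure of its interior. -/
def IsRegularClosed (F : Set X) : Prop := closure (interior F) = F

/-! The image of a non-empty open set under a skeletal map is somewhere dense, and this
characterises skeletal maps. For a closed map on a π-regular space, shrink an open `U` to an open
`V` with `cl V ⊆ U`; then `cl (f V) ⊆ f (cl V) ⊆ f U`, so the non-empty interior of `cl (f V)`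
lies in `f U`. -/

variable {f : X → Y}

theorem Skeletal.dense_preimage (hs : Skeletal f) {W : Set Y} (hW : IsOpen W) (hd : Dense W) :
    Dense (f ⁻¹' W) := by
  have h := hs W hW
  rwa [hd.closure_eq, preimage_univ, interior_univ, univ_subset_iff, ← dense_iff_closure_eq] at h

theorem skeletal_iff_interior_closure_image_nonempty :
    Skeletal f ↔
      ∀ U : Set X, IsOpen U → U.Nonempty → (interior (closure (f '' U))).Nonempty := by
  constructor
  · intro hs U hU hne
    by_contra hempty
    rw [not_nonempty_iff_eq_empty, interior_eq_empty_iff_dense_compl] at hempty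
    obtain ⟨u, huU, hu⟩ :=
      (hs.dense_preimage isClosed_closure.isOpen_compl hempty).inter_open_nonempty U hU hne
    exact hu (subset_closure (mem_image_of_mem f huU))
  · intro h V hV x hx
    refine mem_closure_iff.2 fun W hW hxW => ?_
    set U := W ∩ interior (f ⁻¹' closure V)
    have himage : f '' U ⊆ closure V :=
      image_subset_iff.2 (inter_subset_right.trans interior_subset)
    obtain ⟨y, hy⟩ := h U (hW.inter isOpen_interior) ⟨x, hxW, hx⟩
    have hyV : y ∈ closure V := closure_minimal himage isClosed_closure (interior_subset hy)
    obtain ⟨z, hzV, hz⟩ := (closure_inter_open_nonempty_iff isOpen_interior).1 ⟨y, hyV, hy⟩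
    obtain ⟨_, hzV', u, hu, rfl⟩ := mem_closure_iff.1 (interior_subset hz) V hV hzV
    exact ⟨u, hu.1, hzV'⟩

theorem QuasiOpen.skeletal (hq : QuasiOpen f) : Skeletal f :=
  skeletal_iff_interior_closure_image_nonempty.2 fun U hU hne =>
    (hq U hU hne).mono (interior_mono subset_closure)

theorem Skeletal.quasiOpen_of_isClosedMap (hX : PiRegular X) (hc : IsClosedMap f)
    (hs : Skeletal f) : QuasiOpen f := by
  intro U hU hne
  obtain ⟨V, hV, hVne, hVU⟩ := hX U hU hne
  have hsub : closure (f '' V) ⊆ f '' U := (hc.closure_image_subset V).trans (image_mono hVU)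
  exact (skeletal_iff_interior_closure_image_nonempty.1 hs V hV hVne).mono (interior_mono hsub)

theorem quasiOpen_iff_skeletal_general (f : X → Y) (hX : PiRegular X)
    (hc : IsClosedMap f) :
    QuasiOpen f ↔ Skeletal f :=
  ⟨QuasiOpen.skeletal, Skeletal.quasiOpen_of_isClosedMap hX hc⟩

/-- For a continuous closed map on a π-regular space, quasi-open is the same
as skeletal. -/
theorem quasiOpen_iff_skeletal (f : X → Y) (hX : PiRegular X)
    (hf : Continuous f) (hc : IsClosedMap f) :
    QuasiOpen f ↔ Skeletal f :=
  quasiOpen_iff_skeletal_general f hX hc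
end

section
/- Let f: X → Y be a closed continuous map with X π-regular. Then f is quasi-open if and only if f(F) is regular closed in Y for every regular closed F ⊆ X. In particular, if f: X → Y is quasi-open and closed then f(X) is regular closed in Y. -/
open Set

variable {X Y : Type*} [TopologicalSpace X] [TopologicalSpace Y]

/-
Quasi-openness of a continuous `f` says exactly that `f '' U` lies in the closure of the interior
of `f '' U` for every open `U`, so `closure (f '' U)` is regular closed. A closed continuous map
sends `F = closure (interior F)` to `closure (f '' interior F)`, which settles one direction.
Conversely, by π-regularity every non-empty open `U` contains a non-empty regular closed set
`closure V`; its image is non-empty and regular closed, hence has non-empty interior.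
-/

theorem isRegularClosed_univ : IsRegularClosed (univ : Set X) := by
  simp [IsRegularClosed]

theorem IsOpen.isRegularClosed_closure {V : Set X} (hV : IsOpen V) :
    IsRegularClosed (closure V) :=
  isClosed_closure.closure_interior_subset.antisymm (closure_mono hV.subset_interior_closure)

theorem IsRegularClosed.interior_nonempty {F : Set X} (hF : IsRegularClosed F)
    (hne : F.Nonempty) : (interior F).Nonempty := by
  rw [← hF] at hne
  exact closure_nonempty_iff.mp hne

namespace QuasiOpen

variable {f : X → Y}

theorem image_subset_closure_interior_image (hq : QuasiOpen f) (hf : Continuous f) {U : Set X}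
    (hU : IsOpen U) : f '' U ⊆ closure (interior (f '' U)) := by
  rintro _ ⟨x, hxU, rfl⟩
  refine mem_closure_iff.mpr fun W hW hxW => ?_
  obtain ⟨y, hy⟩ := hq (U ∩ f ⁻¹' W) (hU.inter (hW.preimage hf)) ⟨x, hxU, hxW⟩
  have hyW : y ∈ W := by
    obtain ⟨z, hz, rfl⟩ := interior_subset hy
    exact hz.2
  exact ⟨y, hyW, interior_mono (image_mono inter_subset_left) hy⟩

theorem isRegularClosed_closure_image (hq : QuasiOpen f) (hf : Continuous f) {U : Set X}
    (hU : IsOpen U) : IsRegularClosed (closure (f '' U)) :=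
  isClosed_closure.closure_interior_subset.antisymm <|
    closure_minimal
      ((hq.image_subset_closure_interior_image hf hU).trans
        (closure_mono (interior_mono subset_closure)))
      isClosed_closure

theorem isRegularClosed_image (hq : QuasiOpen f) (hf : Continuous f) (hc : IsClosedMap f)
    {F : Set X} (hF : IsRegularClosed F) : IsRegularClosed (f '' F) := by
  rw [← hF, ← hc.closure_image_eq_of_continuous hf]
  exact hq.isRegularClosed_closure_image hf isOpen_interior

end QuasiOpen

theorem PiRegular.quasiOpen_of_isRegularClosed_image {f : X → Y} (hX : PiRegular X)
    (h : ∀ F : Set X, IsRegularClosed F → IsRegularClosed (f '' F)) : QuasiOpen f := by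
  intro U hU hUne
  obtain ⟨V, hV, hVne, hVU⟩ := hX U hU hUne
  have hint : (interior (f '' closure V)).Nonempty :=
    (h _ hV.isRegularClosed_closure).interior_nonempty (hVne.closure.image f)
  exact hint.mono (interior_mono (image_mono hVU))

/-- For a closed continuous map on a π-regular space, quasi-openness is
equivalent to preservation of regular closed sets; in particular, any
quasi-open closed continuous map has regular closed image. -/
theorem quasiOpen_iff_image_regularClosed (f : X → Y) (hX : PiRegular X)
    (hf : Continuous f) (hc : IsClosedMap f) :
    (QuasiOpen f ↔
      ∀ F : Set X, IsRegularClosed F → IsRegularClosed (f '' F)) ∧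
    (∀ (Z W : Type*) [TopologicalSpace Z] [TopologicalSpace W] (g : Z → W),
      Continuous g → IsClosedMap g → QuasiOpen g →
      IsRegularClosed (g '' univ)) :=
  ⟨⟨fun hq _ hF => hq.isRegularClosed_image hf hc hF, hX.quasiOpen_of_isRegularClosed_image⟩,
    fun _ _ _ _ _ hg hcg hq => hq.isRegularClosed_image hg hcg isRegularClosed_univ⟩
end
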